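/- arXiv:1910.08262 — 2 statements merged into one kernel-verified Lean document; each statement's English description precedes it below -/
import Mathlib

section
/- (Correctness of the preemptive-rise noise mitigation.) Let φ > 0 and ψ > 0 be real numbers and set φ' = φ + 2ψ. Define x mod φ' = x - φ'·⌊x/φ'⌋. Let m, k, γ be real numbers with 0 ≤ m < φ, 0 ≤ k < φ', and |γ| ≤ ψ. Then the preemptive-rise decryption of the noisy cryptogram exactly recovers the plaintext plus noise: ((((m + k + ψ) mod φ') + γ) - k) mod φ' - ψ = m + γ. In particular, as long as the noise magnitude does not exceed the buffer width ψ, the modulo operation introduces no additional distortion. -/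
/-!
Reduction modulo `φ'` ignores integer multiples of `φ'`, so the inner reduction can be dropped
and the decryption equals `((m + ψ + γ) mod φ') - ψ`. Since `|γ| ≤ ψ`, the number `m + ψ + γ`
already lies in `[0, φ')`, where reduction is the identity.
-/

noncomputable def rmod (x n : ℝ) : ℝ := x - n * ⌊x / n⌋

lemma rmod_add_mul_intCast (x n : ℝ) (j : ℤ) : rmod (x + n * j) n = rmod x n := by
  rcases eq_or_ne n 0 with rfl | hn
  · simp [rmod]
  have hdiv : (x + n * j) / n = x / n + j := by field_simp
  rw [rmod, rmod, hdiv, Int.floor_add_intCast]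
  push_cast
  ring

lemma rmod_eq_self {x n : ℝ} (h0 : 0 ≤ x) (h1 : x < n) : rmod x n = x := by
  have hn : 0 < n := h0.trans_lt h1
  have hfloor : ⌊x / n⌋ = 0 :=
    Int.floor_eq_zero_iff.mpr ⟨div_nonneg h0 hn.le, (div_lt_one hn).mpr h1⟩
  simp [rmod, hfloor]

lemma rmod_rmod_add (a b n : ℝ) : rmod (rmod a n + b) n = rmod (a + b) n := by
  have h : rmod a n + b = a + b + n * ((-⌊a / n⌋ : ℤ) : ℝ) := by
    rw [rmod]; push_cast; ring
  rw [h, rmod_add_mul_intCast]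

theorem vpsc_preemptive_rise_correctness_general (φ ψ : ℝ)
    (m k γ : ℝ) (hm0 : 0 ≤ m) (hmφ : m < φ)
    (hγ : |γ| ≤ ψ) :
    rmod (rmod (m + k + ψ) (φ + 2 * ψ) + γ - k) (φ + 2 * ψ) - ψ = m + γ := by
  obtain ⟨hγ_lower, hγ_upper⟩ := abs_le.mp hγ
  have hkey : m + k + ψ + (γ - k) = m + ψ + γ := by ring
  rw [add_sub_assoc, rmod_rmod_add, hkey, rmod_eq_self (by linarith) (by linarith)]
  ring

/-- **Correctness of the preemptive-rise noise mitigation.** With buffer width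
`ψ > 0` and enlarged modulus `φ' = φ + 2ψ`, for any plaintext magnitude
`m ∈ [0, φ)`, key `k ∈ [0, φ')` and noise `γ` with `|γ| ≤ ψ`, the preemptive-rise
decryption of the noisy cryptogram recovers `m + γ` exactly:
`(((m + k + ψ) mod φ') + γ - k) mod φ' - ψ = m + γ`. -/
theorem vpsc_preemptive_rise_correctness (φ ψ : ℝ) (hφ : 0 < φ) (hψ : 0 < ψ)
    (m k γ : ℝ) (hm0 : 0 ≤ m) (hmφ : m < φ)
    (hk0 : 0 ≤ k) (hkφ' : k < φ + 2 * ψ) (hγ : |γ| ≤ ψ) :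
    rmod (rmod (m + k + ψ) (φ + 2 * ψ) + γ - k) (φ + 2 * ψ) - ψ = m + γ :=
  vpsc_preemptive_rise_correctness_general φ ψ m k γ hm0 hmφ hγ
end

section
/- (Noiseless correctness of the combined noise-mitigation encryption/decryption, Algorithms 2 and 3.) Let φ > 0 and λ > 0 be real numbers and define x mod n = x - n·⌊x/n⌋ for n = φ + 2λ. Let m and k be real numbers with 0 ≤ m ≤ φ and 0 ≤ k < φ + 2λ. Define the encrypted value c = ((m + λ + k) mod (φ + 2λ)) + λ, and define decryption of a received value r by: r₁ = min r (φ + 3λ), r₂ = max (r₁ - λ) 0, output ((r₂ - k) mod (φ + 2λ)) - λ. Then decrypting c (i.e., with no channel noise) returns exactly m. -/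
/-- The combined-method encryption of a magnitude `m` with key `k`
(Algorithm 2): add the energy buffer `lam`, add the key, reduce modulo
`φ + 2·lam`, and add the carrier energy `lam`. -/
noncomputable def vpscEncCombined (φ lam m k : ℝ) : ℝ :=
  rmod (m + lam + k) (φ + 2 * lam) + lam

/-- The combined-method decryption of a received value `r` with key `k`
(Algorithm 3): clamp impossible magnitudes above `φ + 3·lam`, remove the carrier
energy `lam` clamping below at `0`, subtract the key modulo `φ + 2·lam`, and
remove the energy buffer `lam`. -/
noncomputable def vpscDecCombined (φ lam r k : ℝ) : ℝ :=
  rmod (max (min r (φ + 3 * lam) - lam) 0 - k) (φ + 2 * lam) - lam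


/-!
Decryption inverts encryption step by step. The encrypted value is `c + λ` with
`c ∈ [0, n)`, `n = φ + 2λ`, so neither clamp is active and decryption computes
`((c - k) mod n) - λ`. Reducing modulo `n` before subtracting `k` changes the
argument by an integer multiple of `n`, so this equals `((m + λ) mod n) - λ`, and the
energy buffer makes `m + λ ∈ [λ, φ + λ] ⊆ [0, n)`, where the reduction is the identity.
-/

section rmod

variable {n : ℝ}

lemma rmod_eq_mul_fract (hn : n ≠ 0) (x : ℝ) : rmod x n = n * Int.fract (x / n) := by
  rw [rmod, ← Int.self_sub_floor, mul_sub, mul_div_cancel₀ x hn]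

lemma rmod_mem_Ico (hn : 0 < n) (x : ℝ) : rmod x n ∈ Set.Ico 0 n := by
  rw [rmod_eq_mul_fract hn.ne']
  exact ⟨mul_nonneg hn.le (Int.fract_nonneg _), mul_lt_of_lt_one_right hn (Int.fract_lt_one _)⟩

lemma rmod_eq_self_s11 {x : ℝ} (hn : 0 < n) (hx : x ∈ Set.Ico 0 n) : rmod x n = x := by
  rw [rmod_eq_mul_fract hn.ne', Int.fract_eq_self.mpr, mul_div_cancel₀ x hn.ne']
  exact ⟨div_nonneg hx.1 hn.le, (div_lt_one hn).mpr hx.2⟩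

lemma rmod_sub_mul_intCast (hn : n ≠ 0) (x : ℝ) (z : ℤ) : rmod (x - n * z) n = rmod x n := by
  rw [rmod_eq_mul_fract hn, rmod_eq_mul_fract hn, sub_div, mul_div_cancel_left₀ _ hn,
    Int.fract_sub_intCast]

lemma rmod_rmod_sub (hn : n ≠ 0) (x k : ℝ) : rmod (rmod x n - k) n = rmod (x - k) n := by
  have hshift : rmod x n - k = x - k - n * ⌊x / n⌋ := by rw [rmod]; ring
  rw [hshift, rmod_sub_mul_intCast hn]

end rmod

lemma vpscDecCombined_add_of_mem_Ico {φ lam c : ℝ} (hc : c ∈ Set.Ico 0 (φ + 2 * lam))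
    (k : ℝ) : vpscDecCombined φ lam (c + lam) k = rmod (c - k) (φ + 2 * lam) - lam := by
  have hmin : min (c + lam) (φ + 3 * lam) = c + lam := min_eq_left (by linarith [hc.2])
  rw [vpscDecCombined, hmin, add_sub_cancel_right, max_eq_left hc.1]

theorem vpsc_combined_noiseless_correctness_general (φ lam : ℝ)
    (hlam : 0 < lam) (m k : ℝ) (hm0 : 0 ≤ m) (hmφ : m ≤ φ) :
    vpscDecCombined φ lam (vpscEncCombined φ lam m k) k = m := by
  have hn : 0 < φ + 2 * lam := by linarith
  have hbuffered : m + lam ∈ Set.Ico 0 (φ + 2 * lam) := ⟨by linarith, by linarith⟩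
  rw [vpscEncCombined, vpscDecCombined_add_of_mem_Ico (rmod_mem_Ico hn _),
    rmod_rmod_sub hn.ne', add_sub_cancel_right, rmod_eq_self_s11 hn hbuffered, add_sub_cancel_right]

/-- **Noiseless correctness of the combined noise-mitigation method
(Algorithms 2 and 3).** For `m ∈ [0, φ]` and `k ∈ [0, φ + 2λ)`, decrypting the
encrypted value with no channel noise returns exactly `m`. -/
theorem vpsc_combined_noiseless_correctness (φ lam : ℝ) (hφ : 0 < φ)
    (hlam : 0 < lam) (m k : ℝ) (hm0 : 0 ≤ m) (hmφ : m ≤ φ)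
    (hk0 : 0 ≤ k) (hkφ : k < φ + 2 * lam) :
    vpscDecCombined φ lam (vpscEncCombined φ lam m k) k = m :=
  vpsc_combined_noiseless_correctness_general φ lam hlam m k hm0 hmφ
end
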